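/- Let Ω = [ā,b̄] with integers 1 ≤ a < b be a metallic-colored ratio, with T = [[ab+1,a],[b,1]], λ = ab+1+aΩ, and U = (T⁻¹)ᵀ. Then the sequences of primary resonances and of main secondary resonances (the two resonant sequences formed by the resonant convergents) are generated respectively by the primitive integers q̂ = 1 and q̄ = b+1 if a = 1, and by q̂ = a and q̄ = 1 if a ≥ 2; and in both cases the separation satisfies 1 < B₀ ≤ γ̃*_{q̄} = b/a. -/

import Mathlib

open Real Filter Matrix

noncomputable section

/-- Orbit of the Gauss map `g(x) = {1/x}` starting at `Ω`:
`x₀ = Ω`, `x_{j+1} = g(x_j)`. -/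
def gaussOrbit (Ω : ℝ) : ℕ → ℝ
  | 0 => Ω
  | j + 1 => Int.fract (1 / gaussOrbit Ω j)

/-- `cfA Ω j` is the partial quotient `a_{j+1}` of the continued fraction of `Ω`. -/
def cfA (Ω : ℝ) (j : ℕ) : ℤ := ⌊1 / gaussOrbit Ω j⌋

/-- The matrix `[[a, 1], [1, 0]]`. -/
def Acf (a : ℤ) : Matrix (Fin 2) (Fin 2) ℤ := !![a, 1; 1, 0]

/-- The product `A₁ ⋯ A_m` with `A_i = [[a_i, 1], [1, 0]]`. -/
def cfMatProd (Ω : ℝ) (m : ℕ) : Matrix (Fin 2) (Fin 2) ℤ :=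
  ((List.range m).map fun i => Acf (cfA Ω i)).prod

/-- `cfQ Ω (j+1) = q_j`:  `q₋₁ = 0`, `q₀ = 1`, `q_j = a_j q_{j-1} + q_{j-2}`. -/
def cfQ (Ω : ℝ) : ℕ → ℤ
  | 0 => 0
  | 1 => 1
  | j + 2 => cfA Ω j * cfQ Ω (j + 1) + cfQ Ω j

/-- `cfP Ω (j+1) = p_j`:  `p₋₁ = 1`, `p₀ = 0`, `p_j = a_j p_{j-1} + p_{j-2}`. -/
def cfP (Ω : ℝ) : ℕ → ℤ
  | 0 => 1
  | 1 => 0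
  | j + 2 => cfA Ω j * cfP Ω (j + 1) + cfP Ω j

/-- The vector convergent `w(j) = (q_j, p_j)`. -/
def wconv (Ω : ℝ) (j : ℕ) : Fin 2 → ℤ := ![cfQ Ω (j + 1), cfP Ω (j + 1)]

/-- The resonant convergent `v(j) = (−p_j, q_j)`. -/
def vconv (Ω : ℝ) (j : ℕ) : Fin 2 → ℤ := ![-cfP Ω (j + 1), cfQ Ω (j + 1)]

/-- A quadratic irrational number. -/
def IsQuadraticIrrational (Ω : ℝ) : Prop :=
  Irrational Ω ∧ ∃ A B C : ℤ, A ≠ 0 ∧ (A : ℝ) * Ω ^ 2 + (B : ℝ) * Ω + (C : ℝ) = 0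

end
noncomputable section

/-- `⟨k, ω⟩ = k₁ + k₂ Ω` for `ω = (1, Ω)`. -/
def pairω (Ω : ℝ) (k : Fin 2 → ℤ) : ℝ := (k 0 : ℝ) + (k 1 : ℝ) * Ω

/-- `|k|₁ = |k₁| + |k₂|`. -/
def norm1 (k : Fin 2 → ℤ) : ℤ := |k 0| + |k 1|

/-- `p⁰(q)`: the integer nearest to `qΩ`. -/
def p0 (Ω : ℝ) (q : ℤ) : ℤ := round ((q : ℝ) * Ω)

/-- `k⁰(q) = (−p⁰(q), q)`. -/
def kzero (Ω : ℝ) (q : ℤ) : Fin 2 → ℤ := ![-p0 Ω q, q]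

/-- The set `A` of quasi-resonances: vectors `k⁰(q)`, `q ≥ 1`, with `|⟨k,ω⟩| < 1/2`. -/
def inA (Ω : ℝ) (k : Fin 2 → ℤ) : Prop :=
  ∃ q : ℤ, 1 ≤ q ∧ k = kzero Ω q ∧ |pairω Ω k| < 1 / 2

/-- A quasi-resonance `k` is primitive if `U⁻¹k` is not a quasi-resonance. -/
def PrimitiveVec (Ω : ℝ) (U : Matrix (Fin 2) (Fin 2) ℤ) (k : Fin 2 → ℤ) : Prop :=
  inA Ω k ∧ ¬inA Ω (U⁻¹.mulVec k)

/-- A primitive integer `q ≥ 1`. -/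
def PrimitiveInt (Ω : ℝ) (U : Matrix (Fin 2) (Fin 2) ℤ) (q : ℤ) : Prop :=
  1 ≤ q ∧ PrimitiveVec Ω U (kzero Ω q)

/-- The resonant sequence `s(q, n) = Uⁿ k⁰(q)`. -/
def sres (Ω : ℝ) (U : Matrix (Fin 2) (Fin 2) ℤ) (q : ℤ) (n : ℕ) : Fin 2 → ℤ :=
  (U ^ n).mulVec (kzero Ω q)

/-- `U = σ (T⁻¹)ᵀ` with `σ = det T = (−1)^m` and `T = A₁⋯A_m`. -/
def Umat (Ω : ℝ) (m : ℕ) : Matrix (Fin 2) (Fin 2) ℤ :=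
  ((-1 : ℤ) ^ m) • ((cfMatProd Ω m)⁻¹)ᵀ

/-- The numerator `γ_k = |⟨k,ω⟩| · |k|₁`. -/
def gammaK (Ω : ℝ) (k : Fin 2 → ℤ) : ℝ := |pairω Ω k| * (norm1 k : ℝ)

/-- `K_q = |z_q|(1+Ω)/|c+bΩ²|`, where `z_q = cq + bpΩ`, `p = p⁰(q)`,
and `b, c` are the off-diagonal entries of `T = A₁⋯A_m = [[a,b],[c,d]]`. -/
def KqD (Ω : ℝ) (m : ℕ) (q : ℤ) : ℝ :=
  |(cfMatProd Ω m 1 0 : ℝ) * (q : ℝ) + (cfMatProd Ω m 0 1 : ℝ) * (p0 Ω q : ℝ) * Ω| * (1 + Ω) /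
    |(cfMatProd Ω m 1 0 : ℝ) + (cfMatProd Ω m 0 1 : ℝ) * Ω ^ 2|

/-- The limit numerator `γ*_q = |r_q| K_q` with `r_q = qΩ − p⁰(q)`. -/
def gammaStarQ (Ω : ℝ) (m : ℕ) (q : ℤ) : ℝ :=
  |(q : ℝ) * Ω - (p0 Ω q : ℝ)| * KqD Ω m q

end

noncomputable section

/-- The metallic-colored ratio `Ω = [ā,b̄] = (√(a²b²+4ab) − ab)/(2a)`. -/
def mcΩ (a b : ℤ) : ℝ :=
  (Real.sqrt ((a : ℝ) ^ 2 * (b : ℝ) ^ 2 + 4 * (a : ℝ) * (b : ℝ)) - (a : ℝ) * (b : ℝ)) /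
    (2 * (a : ℝ))

/-- `T = [[ab+1, a],[b, 1]]` for a metallic-colored ratio. -/
def mcT (a b : ℤ) : Matrix (Fin 2) (Fin 2) ℤ := !![a * b + 1, a; b, 1]

/-- `U = (T⁻¹)ᵀ` for a metallic-colored ratio (here `det T = 1`). -/
def mcU (a b : ℤ) : Matrix (Fin 2) (Fin 2) ℤ := ((mcT a b)⁻¹)ᵀ

/-- `δ_q = cq² − (a−d)qp − bp² = bq² − ab·qp − ap²` for `T = [[ab+1,a],[b,1]]`. -/
def mcδ (a b q : ℤ) : ℤ :=
  b * q ^ 2 - a * b * q * p0 (mcΩ a b) q - a * (p0 (mcΩ a b) q) ^ 2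

/-- `γ*_q = Ω(1+Ω)|δ_q|/|c+bΩ²|` for a metallic-colored ratio. -/
def mcγ (a b q : ℤ) : ℝ :=
  mcΩ a b * (1 + mcΩ a b) * |(mcδ a b q : ℝ)| / |(b : ℝ) + (a : ℝ) * mcΩ a b ^ 2|

/-- Normalized limit numerator `γ̃*_q = γ*_q/γ*_{q̂}`. -/
def mcγt (a b qh q : ℤ) : ℝ := mcγ a b q / mcγ a b qh

/-- Primitive integer for a metallic-colored ratio. -/
def mcPrim (a b q : ℤ) : Prop := PrimitiveInt (mcΩ a b) (mcU a b) q

/-- Essential primitive integer for a metallic-colored ratio. -/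
def mcEssPrim (a b q : ℤ) : Prop :=
  mcPrim a b q ∧ Int.gcd (kzero (mcΩ a b) q 0) (kzero (mcΩ a b) q 1) = 1

/-- The separation `B₀`: the minimal `γ̃*_q` over essential primitive `q ≠ q̂`. -/
def mcB0 (a b qh : ℤ) : ℝ :=
  sInf {y : ℝ | ∃ q : ℤ, mcEssPrim a b q ∧ q ≠ qh ∧ y = mcγt a b qh q}

end

/-!
`Ω` is the positive root of `aΩ² + abΩ = b`, so with `p = p⁰(q)` and `r = qΩ - p` the form `δ_q`
factors as `a r (p + q(b + Ω))`, and `γ*_q` is a fixed positive multiple of `|δ_q|`.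
Since `U⁻¹ = Tᵀ` multiplies `⟨k, ω⟩` by `λ`, `U⁻¹ k⁰(q) = k⁰(q - ap)` unless `q ≤ ap` or
`λ|r| ≥ 1/2`, so a primitive `q` satisfies one of these. In either case `|δ_q| ≤ a` forces
`q ≤ 2a` and `p ≤ 2`, and among those pairs the integer form has `|δ| ≤ a` only at `(a, 1)`, where
`δ_a = -a`. Hence `γ̃*_q = |δ_q|/a ≥ (a+1)/a` for every primitive `q ≠ a`, while the generators
`q̄` of the secondary resonances have `δ = b`.
-/

lemma round_eq_of_abs_sub_lt {x : ℝ} {n : ℤ} (h : |x - n| < 1 / 2) : round x = n := by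
  obtain ⟨h₁, h₂⟩ := abs_lt.mp h
  rw [round_eq_iff, Set.mem_Ico]
  constructor <;> linarith

lemma lt_abs_of_small {a b q p : ℤ} (ha : 1 ≤ a) (hab : a < b) (hq : 1 ≤ q) (hq₂ : q ≤ 2 * a)
    (hqa : q ≠ a) (hp : 0 ≤ p) (hp₂ : p ≤ 2) : a < |b * q ^ 2 - a * b * q * p - a * p ^ 2| := by
  have hbq : 0 < b * q := mul_pos (by omega) (by omega)
  rw [lt_abs]
  interval_cases p
  · left
    nlinarith
  · rcases hqa.lt_or_gt with hlt | hgt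
    · right
      nlinarith [mul_pos hbq (sub_pos.mpr hlt)]
    · left
      nlinarith [mul_le_mul hab.le (show a + 1 ≤ q by omega) (by omega) (by omega),
        mul_le_mul_of_nonneg_left (show 1 ≤ q - a by omega) hbq.le]
  · right
    nlinarith [mul_nonneg hbq.le (show 0 ≤ 2 * a - q by omega)]

lemma vconv_zero (Ω : ℝ) : vconv Ω 0 = ![0, 1] := by
  simp [vconv, cfP, cfQ]

lemma vconv_one (Ω : ℝ) : vconv Ω 1 = ![-1, cfA Ω 0] := by
  simp [vconv, cfP, cfQ]

lemma vconv_two (Ω : ℝ) : vconv Ω 2 = ![-cfA Ω 1, cfA Ω 1 * cfA Ω 0 + 1] := by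
  simp [vconv, cfP, cfQ]

lemma pairω_kzero (Ω : ℝ) (q : ℤ) : pairω Ω (kzero Ω q) = q * Ω - p0 Ω q := by
  simp [pairω, kzero, neg_add_eq_sub]

lemma p0_nonneg {Ω : ℝ} (hΩ : 0 < Ω) {q : ℤ} (hq : 1 ≤ q) : 0 ≤ p0 Ω q := by
  have : (0 : ℝ) < q * Ω := mul_pos (by exact_mod_cast hq) hΩ
  rw [p0, round_eq]
  exact Int.floor_nonneg.mpr (by linarith)

section MetallicRatio

variable {a b : ℤ}

lemma mcΩ_root (ha : 0 < a) (hb : 0 ≤ b) : (a : ℝ) * mcΩ a b ^ 2 + a * b * mcΩ a b = b := by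
  have ha' : (0 : ℝ) < a := by exact_mod_cast ha
  have hb' : (0 : ℝ) ≤ b := by exact_mod_cast hb
  have hs := Real.sq_sqrt (show (0 : ℝ) ≤ a ^ 2 * b ^ 2 + 4 * a * b by positivity)
  unfold mcΩ
  generalize √(a ^ 2 * b ^ 2 + 4 * a * b : ℝ) = s at hs ⊢
  field_simp
  linear_combination hs

lemma mcΩ_pos (ha : 0 < a) (hb : 0 < b) : 0 < mcΩ a b := by
  have ha' : (0 : ℝ) < a := by exact_mod_cast ha
  have hb' : (0 : ℝ) < b := by exact_mod_cast hb
  have : (a : ℝ) * b < √(a ^ 2 * b ^ 2 + 4 * a * b) :=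
    (Real.lt_sqrt (by positivity)).mpr (by nlinarith [mul_pos ha' hb'])
  exact div_pos (by linarith) (by positivity)

lemma mul_mcΩ_lt_one (ha : 0 < a) (hb : 0 < b) : a * mcΩ a b < 1 := by
  have hΩ := mcΩ_pos ha hb
  have hroot := mcΩ_root ha hb.le
  have ha' : (0 : ℝ) < a := by exact_mod_cast ha
  have hb' : (0 : ℝ) < b := by exact_mod_cast hb
  by_contra! h
  nlinarith [mul_le_mul_of_nonneg_left h hb'.le, mul_pos ha' (mul_pos hΩ hΩ)]

lemma half_lt_mul_mcΩ (ha : 1 ≤ a) (hb : 2 ≤ b) : 1 / 2 < a * mcΩ a b := by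
  have ha₀ : 0 < a := by omega
  have hb₀ : 0 < b := by omega
  have hΩ := mcΩ_pos ha₀ hb₀
  have haΩ := mul_mcΩ_lt_one ha₀ hb₀
  have hroot := mcΩ_root ha₀ hb₀.le
  have ha' : (1 : ℝ) ≤ a := by exact_mod_cast ha
  have hb' : (2 : ℝ) ≤ b := by exact_mod_cast hb
  -- `b (1 - aΩ) = aΩ² < 1`
  nlinarith [mul_lt_mul_of_pos_right haΩ hΩ]

lemma p0_mcΩ_self (ha : 1 ≤ a) (hb : 2 ≤ b) : p0 (mcΩ a b) a = 1 := by
  have h₁ := half_lt_mul_mcΩ ha hb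
  have h₂ := mul_mcΩ_lt_one (show 0 < a by omega) (show 0 < b by omega)
  apply round_eq_of_abs_sub_lt
  rw [abs_lt]
  push_cast
  constructor <;> linarith

lemma p0_mcΩ_one (ha : 2 ≤ a) (hb : 0 < b) : p0 (mcΩ a b) 1 = 0 := by
  have ha₀ : 0 < a := by omega
  have hΩ := mcΩ_pos ha₀ hb
  have haΩ := mul_mcΩ_lt_one ha₀ hb
  have ha' : (2 : ℝ) ≤ a := by exact_mod_cast ha
  apply round_eq_of_abs_sub_lt
  rw [abs_lt]
  push_cast
  constructor <;> nlinarith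

lemma p0_mcΩ_add_one (hb : 0 < b) : p0 (mcΩ 1 b) (b + 1) = b := by
  have hΩ := mcΩ_pos one_pos hb
  have hΩ₁ := mul_mcΩ_lt_one one_pos hb
  have hroot := mcΩ_root one_pos hb.le
  push_cast at hΩ₁ hroot
  -- `(b + 1)Ω - b = Ω - Ω²`
  apply round_eq_of_abs_sub_lt
  rw [abs_lt]
  push_cast
  constructor <;> nlinarith

lemma cfA_mcΩ_zero (ha : 0 < a) (hb : 0 < b) : cfA (mcΩ a b) 0 = a := by
  have hΩ := mcΩ_pos ha hb
  have haΩ := mul_mcΩ_lt_one ha hb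
  have hroot := mcΩ_root ha hb.le
  have hb' : (1 : ℝ) ≤ b := by exact_mod_cast hb
  rw [cfA, gaussOrbit, Int.floor_eq_iff, le_div_iff₀ hΩ, div_lt_iff₀ hΩ]
  constructor <;> nlinarith

lemma gaussOrbit_mcΩ_one (ha : 0 < a) (hb : 0 < b) :
    gaussOrbit (mcΩ a b) 1 = 1 / (b + mcΩ a b) := by
  have hΩ := mcΩ_pos ha hb
  have hroot := mcΩ_root ha hb.le
  have hb' : (0 : ℝ) < b := by exact_mod_cast hb
  rw [gaussOrbit, Int.fract, ← cfA, cfA_mcΩ_zero ha hb, gaussOrbit]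
  field_simp
  linear_combination -hroot

lemma cfA_mcΩ_one (ha : 1 ≤ a) (hb : 0 < b) : cfA (mcΩ a b) 1 = b := by
  have ha₀ : 0 < a := by omega
  have hΩ := mcΩ_pos ha₀ hb
  have haΩ := mul_mcΩ_lt_one ha₀ hb
  have ha' : (1 : ℝ) ≤ a := by exact_mod_cast ha
  rw [cfA, gaussOrbit_mcΩ_one ha₀ hb, one_div_one_div, Int.floor_eq_iff]
  constructor <;> nlinarith

lemma mcT_det : (mcT a b).det = 1 := by
  simp [mcT, Matrix.det_fin_two]

lemma mcU_inv : (mcU a b)⁻¹ = (mcT a b)ᵀ := by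
  rw [mcU, Matrix.transpose_nonsing_inv, Matrix.nonsing_inv_nonsing_inv]
  simp [mcT_det]

lemma mcT_transpose_mulVec (k : Fin 2 → ℤ) :
    (mcT a b)ᵀ *ᵥ k = ![(a * b + 1) * k 0 + b * k 1, a * k 0 + k 1] := by
  simp [mcT, mulVec_fin_two]

lemma mcU_inv_mulVec_kzero (Ω : ℝ) (q : ℤ) :
    (mcU a b)⁻¹ *ᵥ kzero Ω q = ![b * q - (a * b + 1) * p0 Ω q, q - a * p0 Ω q] := by
  rw [mcU_inv, mcT_transpose_mulVec]
  simp only [kzero, cons_val_zero, cons_val_one, cons_val_fin_one]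
  ring_nf

/-- The eigenvalue `λ` of `T` for the eigenvector `(1, Ω)`. -/
noncomputable def mcLambda (a b : ℤ) : ℝ := a * b + 1 + a * mcΩ a b

lemma mcLambda_pos (ha : 0 < a) (hb : 0 < b) : 0 < mcLambda a b := by
  have := mcΩ_pos ha hb
  have : (0 : ℝ) < a * b := by exact_mod_cast mul_pos ha hb
  unfold mcLambda
  positivity

lemma mcLambda_mul_eq (ha : 0 < a) (hb : 0 ≤ b) (q p : ℤ) :
    mcLambda a b * (q * mcΩ a b - p) =
      ((q - a * p : ℤ) : ℝ) * mcΩ a b - ((a * b + 1) * p - b * q : ℤ) := by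
  unfold mcLambda
  push_cast
  linear_combination (q : ℝ) * mcΩ_root ha hb

lemma pairω_mcU_inv_mulVec (ha : 0 < a) (hb : 0 ≤ b) (k : Fin 2 → ℤ) :
    pairω (mcΩ a b) ((mcU a b)⁻¹ *ᵥ k) = mcLambda a b * pairω (mcΩ a b) k := by
  rw [mcU_inv, mcT_transpose_mulVec, pairω, pairω, mcLambda]
  simp only [cons_val_zero, cons_val_one, cons_val_fin_one]
  push_cast
  linear_combination -(k 1 : ℝ) * mcΩ_root ha hb

lemma inA_mcU_inv_mulVec_kzero_iff (ha : 0 < a) (hb : 0 ≤ b) (q : ℤ) :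
    inA (mcΩ a b) ((mcU a b)⁻¹ *ᵥ kzero (mcΩ a b) q) ↔
      a * p0 (mcΩ a b) q < q ∧
        p0 (mcΩ a b) (q - a * p0 (mcΩ a b) q) = (a * b + 1) * p0 (mcΩ a b) q - b * q ∧
        |mcLambda a b * (q * mcΩ a b - p0 (mcΩ a b) q)| < 1 / 2 := by
  rw [inA, pairω_mcU_inv_mulVec ha hb, pairω_kzero, mcU_inv_mulVec_kzero]
  simp only [kzero, vecCons_inj, and_true]
  constructor
  · rintro ⟨q', hq', ⟨h₀, h₁⟩, hl⟩
    subst h₁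
    exact ⟨by omega, by omega, hl⟩
  · rintro ⟨hq, hp, hl⟩
    exact ⟨_, by omega, ⟨by omega, rfl⟩, hl⟩

lemma mcPrim_of (ha : 0 < a) (hb : 0 ≤ b) {q : ℤ} (hq : 1 ≤ q)
    (hr : |q * mcΩ a b - p0 (mcΩ a b) q| < 1 / 2)
    (hU : q ≤ a * p0 (mcΩ a b) q ∨
      p0 (mcΩ a b) (q - a * p0 (mcΩ a b) q) ≠ (a * b + 1) * p0 (mcΩ a b) q - b * q) :
    mcPrim a b q := by
  refine ⟨hq, ⟨q, hq, rfl, by rwa [pairω_kzero]⟩, ?_⟩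
  rw [inA_mcU_inv_mulVec_kzero_iff ha hb]
  omega

lemma mcPrim.le_or_half_le (ha : 0 < a) (hb : 0 < b) {q : ℤ} (hq : mcPrim a b q) :
    q ≤ a * p0 (mcΩ a b) q ∨ 1 / 2 ≤ mcLambda a b * |q * mcΩ a b - p0 (mcΩ a b) q| := by
  by_contra! h
  obtain ⟨hqp, hl⟩ := h
  have hl' : |mcLambda a b * (q * mcΩ a b - p0 (mcΩ a b) q)| < 1 / 2 := by
    rwa [abs_mul, abs_of_pos (mcLambda_pos ha hb)]
  refine hq.2.2 ((inA_mcU_inv_mulVec_kzero_iff ha hb.le q).mpr ⟨hqp, ?_, hl'⟩)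
  apply round_eq_of_abs_sub_lt
  rwa [← mcLambda_mul_eq ha hb.le]

lemma mcδ_eq (ha : 0 < a) (hb : 0 ≤ b) (q : ℤ) :
    (mcδ a b q : ℝ) =
      a * (q * mcΩ a b - p0 (mcΩ a b) q) * (p0 (mcΩ a b) q + q * (b + mcΩ a b)) := by
  rw [mcδ]
  push_cast
  linear_combination -(q : ℝ) ^ 2 * mcΩ_root ha hb

lemma abs_mcδ_eq (ha : 0 < a) (hb : 0 < b) {q : ℤ} (hq : 1 ≤ q) :
    |(mcδ a b q : ℝ)| =
      a * |q * mcΩ a b - p0 (mcΩ a b) q| * (p0 (mcΩ a b) q + q * (b + mcΩ a b)) := by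
  have hΩ := mcΩ_pos ha hb
  have hp : (0 : ℝ) ≤ p0 (mcΩ a b) q := by exact_mod_cast p0_nonneg hΩ hq
  have : (0 : ℝ) < a := by exact_mod_cast ha
  have : (0 : ℝ) < q * (b + mcΩ a b) := by
    have : (0 : ℝ) < b := by exact_mod_cast hb
    have : (1 : ℝ) ≤ q := by exact_mod_cast hq
    positivity
  rw [mcδ_eq ha hb.le, abs_mul, abs_mul, abs_of_pos ‹(0 : ℝ) < a›,
    abs_of_pos (by positivity : (0 : ℝ) < p0 (mcΩ a b) q + q * (b + mcΩ a b))]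

lemma bounded_of_le_mul_p0 (ha : 1 ≤ a) (hb : 0 < b) {q : ℤ} (hq : 1 ≤ q)
    (hqp : q ≤ a * p0 (mcΩ a b) q) (hδ : |(mcδ a b q : ℝ)| ≤ a) :
    q ≤ 2 * a ∧ p0 (mcΩ a b) q ≤ 2 := by
  have ha₀ : 0 < a := by omega
  have hΩ := mcΩ_pos ha₀ hb
  have hroot := mcΩ_root ha₀ hb.le
  have hround := abs_sub_round ((q : ℝ) * mcΩ a b)
  rw [abs_mcδ_eq ha₀ hb hq] at hδ
  rw [← p0] at hround
  set Ω := mcΩ a b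
  set p := p0 Ω q
  have ha' : (1 : ℝ) ≤ a := by exact_mod_cast ha
  have hb' : (0 : ℝ) < b := by exact_mod_cast hb
  have hq' : (1 : ℝ) ≤ q := by exact_mod_cast hq
  have hqp' : (q : ℝ) ≤ a * p := by exact_mod_cast hqp
  have hp : 1 ≤ p := by nlinarith
  have hp' : (1 : ℝ) ≤ p := by exact_mod_cast hp
  have hqΩ : q * Ω ≤ 1 := by
    by_contra! h
    -- `a (qΩ)² = q (1 - aΩ) · q b`, and each factor bounds the matching factor of `|δ|`.
    have : (a : ℝ) < a * |q * Ω - p| * (p + q * (b + Ω)) :=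
      calc (a : ℝ) < a * (q * Ω) ^ 2 :=
            lt_mul_of_one_lt_right (by positivity) (one_lt_pow₀ h two_ne_zero)
        _ = q * (1 - a * Ω) * (q * b) := by linear_combination (q : ℝ) ^ 2 * hroot
        _ ≤ a * |q * Ω - p| * (p + q * (b + Ω)) := by
          apply mul_le_mul _ (by nlinarith) (by positivity) (by positivity)
          nlinarith [neg_abs_le (q * Ω - p)]
    linarith
  have hp₁ : p ≤ 1 := by
    have : (p : ℝ) < 2 := by linarith [(abs_le.mp hround).1]
    have : p < 2 := by exact_mod_cast this
    omega
  constructor <;> nlinarith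

lemma bounded_of_half_le_mcLambda_mul (ha : 1 ≤ a) (hb : 2 ≤ b) {q : ℤ} (hq : 1 ≤ q)
    (hl : 1 / 2 ≤ mcLambda a b * |q * mcΩ a b - p0 (mcΩ a b) q|)
    (hδ : |(mcδ a b q : ℝ)| ≤ a) :
    q ≤ 2 * a ∧ p0 (mcΩ a b) q ≤ 2 := by
  have ha₀ : 0 < a := by omega
  have hb₀ : 0 < b := by omega
  have hΩ := mcΩ_pos ha₀ hb₀
  have haΩ := mul_mcΩ_lt_one ha₀ hb₀
  have haΩ' := half_lt_mul_mcΩ ha hb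
  have hround := abs_sub_round ((q : ℝ) * mcΩ a b)
  have hp := p0_nonneg hΩ hq
  rw [abs_mcδ_eq ha₀ hb₀ hq] at hδ
  rw [← p0] at hround
  unfold mcLambda at hl
  set Ω := mcΩ a b
  set p := p0 Ω q
  set s : ℝ := p + q * (b + Ω)
  have ha' : (1 : ℝ) ≤ a := by exact_mod_cast ha
  have hb' : (2 : ℝ) ≤ b := by exact_mod_cast hb
  have hq' : (1 : ℝ) ≤ q := by exact_mod_cast hq
  have hp' : (0 : ℝ) ≤ p := by exact_mod_cast hp
  have hs : 0 < s := by positivity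
  -- `|δ| = a |r| s ≤ a` and `λ |r| ≥ 1/2` give `s ≤ 2λ`.
  have hs_le : s ≤ 2 * (a * b + 1 + a * Ω) := by
    have : |q * Ω - p| * s ≤ 1 := by nlinarith
    nlinarith [mul_le_mul_of_nonneg_right hl hs.le]
  have hq₂ : q ≤ 2 * a := by
    by_contra! h
    have h' : (2 * a + 1 : ℝ) ≤ q := by exact_mod_cast h
    have : (2 * a + 1) * (b + 2 * Ω) - 1 / 2 ≤ s := by
      nlinarith [(abs_le.mp hround).1]
    nlinarith
  have hq₂' : (q : ℝ) ≤ 2 * a := by exact_mod_cast hq₂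
  have : (p : ℝ) < 3 := by nlinarith [(abs_le.mp hround).1]
  have : p < 3 := by exact_mod_cast this
  exact ⟨hq₂, by omega⟩

lemma lt_abs_mcδ (ha : 1 ≤ a) (hab : a < b) {q : ℤ} (hq : mcPrim a b q) (hqa : q ≠ a) :
    a < |mcδ a b q| := by
  have ha₀ : 0 < a := by omega
  have hb₀ : 0 < b := by omega
  have hq₁ : 1 ≤ q := hq.1
  by_contra! hδ
  have hδ' : |(mcδ a b q : ℝ)| ≤ a := by exact_mod_cast hδ
  obtain ⟨hq₂, hp₂⟩ := (hq.le_or_half_le ha₀ hb₀).elim (bounded_of_le_mul_p0 ha hb₀ hq₁ · hδ')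
    (bounded_of_half_le_mcLambda_mul ha (by omega) hq₁ · hδ')
  exact hδ.not_gt <| lt_abs_of_small ha hab hq₁ hq₂ hqa (p0_nonneg (mcΩ_pos ha₀ hb₀) hq₁) hp₂

lemma mcγ_denom_pos (ha : 0 < a) (hb : 0 < b) : (0 : ℝ) < b + a * mcΩ a b ^ 2 := by
  have := mcΩ_pos ha hb
  have : (0 : ℝ) < a := by exact_mod_cast ha
  have : (0 : ℝ) < b := by exact_mod_cast hb
  positivity

lemma mcγ_lt_mcγ (ha : 0 < a) (hb : 0 < b) {q q' : ℤ} (h : |mcδ a b q| < |mcδ a b q'|) :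
    mcγ a b q < mcγ a b q' := by
  have hΩ := mcΩ_pos ha hb
  have := mcγ_denom_pos ha hb
  unfold mcγ
  gcongr
  exact_mod_cast h

lemma mcγt_eq_abs_div (ha : 0 < a) (hb : 0 < b) (qh q : ℤ) :
    mcγt a b qh q = |(mcδ a b q : ℝ)| / |(mcδ a b qh : ℝ)| := by
  have hΩ := mcΩ_pos ha hb
  have := mcγ_denom_pos ha hb
  unfold mcγt mcγ
  rw [mul_div_right_comm, mul_div_right_comm _ |(mcδ a b qh : ℝ)|, mul_div_mul_left]
  positivity

lemma mcδ_self (ha : 1 ≤ a) (hb : 2 ≤ b) : mcδ a b a = -a := by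
  rw [mcδ, p0_mcΩ_self ha hb]
  ring

lemma mcγ_self_lt (ha : 1 ≤ a) (hab : a < b) {q : ℤ} (hq : mcPrim a b q) (hqa : q ≠ a) :
    mcγ a b a < mcγ a b q := by
  apply mcγ_lt_mcγ (by omega) (by omega)
  rw [mcδ_self ha (by omega), abs_neg, abs_of_pos (by omega)]
  exact lt_abs_mcδ ha hab hq hqa

lemma mcγt_self_eq (ha : 1 ≤ a) (hb : 2 ≤ b) (q : ℤ) :
    mcγt a b a q = |(mcδ a b q : ℝ)| / a := by
  have ha' : (0 : ℝ) < a := by exact_mod_cast (show 0 < a by omega)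
  rw [mcγt_eq_abs_div (by omega) (by omega), mcδ_self ha hb]
  push_cast
  rw [abs_neg, abs_of_pos ha']

lemma mcB0_bounds (ha : 1 ≤ a) (hab : a < b) {q : ℤ} (hq : mcEssPrim a b q) (hqa : q ≠ a) :
    1 < mcB0 a b a ∧ mcB0 a b a ≤ mcγt a b a q := by
  have ha' : (0 : ℝ) < a := by exact_mod_cast (show 0 < a by omega)
  have hmem : mcγt a b a q ∈ {y : ℝ | ∃ q : ℤ, mcEssPrim a b q ∧ q ≠ a ∧ y = mcγt a b a q} :=
    ⟨q, hq, hqa, rfl⟩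
  have hlb : ∀ y ∈ {y : ℝ | ∃ q : ℤ, mcEssPrim a b q ∧ q ≠ a ∧ y = mcγt a b a q},
      (a + 1) / a ≤ y := by
    rintro _ ⟨q', hq', hq'a, rfl⟩
    rw [mcγt_self_eq ha (by omega)]
    have : a + 1 ≤ |mcδ a b q'| := lt_abs_mcδ ha hab hq'.1 hq'a
    gcongr
    exact_mod_cast this
  exact ⟨((one_lt_div ha').mpr (by linarith)).trans_le (le_csInf ⟨_, hmem⟩ hlb),
    csInf_le ⟨_, hlb⟩ hmem⟩

lemma mcPrim_self (ha : 1 ≤ a) (hb : 2 ≤ b) : mcPrim a b a := by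
  have h₁ := half_lt_mul_mcΩ ha hb
  have h₂ := mul_mcΩ_lt_one (show 0 < a by omega) (show 0 < b by omega)
  apply mcPrim_of (by omega) (by omega) ha <;> rw [p0_mcΩ_self ha hb]
  · rw [abs_lt]
    push_cast
    constructor <;> linarith
  · omega

lemma mcEssPrim_one (ha : 2 ≤ a) (hb : 0 < b) : mcEssPrim a b 1 := by
  have hΩ := mcΩ_pos (show 0 < a by omega) hb
  have haΩ := mul_mcΩ_lt_one (show 0 < a by omega) hb
  have ha' : (2 : ℝ) ≤ a := by exact_mod_cast ha
  refine ⟨mcPrim_of (by omega) hb.le le_rfl ?_ ?_, ?_⟩ <;>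
    simp only [kzero, mul_zero, sub_zero, p0_mcΩ_one ha hb, cons_val_zero,
      cons_val_one]
  · rw [abs_lt]
    push_cast
    constructor <;> nlinarith
  · omega
  · simp

lemma mcEssPrim_add_one (hb : 2 ≤ b) : mcEssPrim 1 b (b + 1) := by
  have hb₀ : 0 < b := by omega
  have hΩ := mcΩ_pos one_pos hb₀
  have hΩ₁ := mul_mcΩ_lt_one one_pos hb₀
  have hroot := mcΩ_root one_pos hb₀.le
  push_cast at hΩ₁ hroot
  refine ⟨mcPrim_of one_pos hb₀.le (by omega) ?_ ?_, ?_⟩ <;>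
    simp only [kzero, p0_mcΩ_add_one hb₀, cons_val_zero, cons_val_one]
  · rw [abs_lt]
    push_cast
    constructor <;> nlinarith
  · right
    rw [show b + 1 - 1 * b = 1 by ring, p0_mcΩ_self le_rfl hb]
    lia
  · exact Int.isCoprime_iff_gcd_eq_one.mp ⟨1, 1, by ring⟩

lemma mcδ_one (ha : 2 ≤ a) (hb : 0 < b) : mcδ a b 1 = b := by
  rw [mcδ, p0_mcΩ_one ha hb]
  ring

lemma mcδ_add_one (hb : 0 < b) : mcδ 1 b (b + 1) = b := by
  rw [mcδ, p0_mcΩ_add_one hb]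
  ring

lemma kzero_mcΩ_self (ha : 1 ≤ a) (hb : 2 ≤ b) : kzero (mcΩ a b) a = vconv (mcΩ a b) 1 := by
  rw [vconv_one, cfA_mcΩ_zero (by omega) (by omega), kzero, p0_mcΩ_self ha hb]

lemma kzero_mcΩ_one (ha : 2 ≤ a) (hb : 0 < b) : kzero (mcΩ a b) 1 = vconv (mcΩ a b) 0 := by
  rw [vconv_zero, kzero, p0_mcΩ_one ha hb, neg_zero]

lemma kzero_mcΩ_add_one (hb : 0 < b) : kzero (mcΩ 1 b) (b + 1) = vconv (mcΩ 1 b) 2 := by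
  rw [vconv_two, cfA_mcΩ_zero one_pos hb, cfA_mcΩ_one le_rfl hb, kzero, p0_mcΩ_add_one hb,
    mul_one]

end MetallicRatio

/-- Proposition 7: for a metallic-colored ratio `Ω = [ā,b̄]`, `1 ≤ a < b`, the primary
resonances and the main secondary resonances (the two resonant sequences formed by the
resonant convergents) are generated respectively by `q̂ = 1`, `q̄ = b+1` if `a = 1`, and
by `q̂ = a`, `q̄ = 1` if `a ≥ 2`; in both cases `1 < B₀ ≤ γ̃*_{q̄} = b/a`. -/
theorem splitting_quadratic_stmt15 (a b : ℤ) (ha : 1 ≤ a) (hab : a < b) :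
    (a = 1 →
      mcPrim a b 1 ∧ mcPrim a b (b + 1) ∧
      (∀ q : ℤ, mcPrim a b q → q ≠ 1 → mcγ a b 1 < mcγ a b q) ∧
      kzero (mcΩ a b) 1 = vconv (mcΩ a b) 1 ∧
      kzero (mcΩ a b) (b + 1) = vconv (mcΩ a b) 2 ∧
      1 < mcB0 a b 1 ∧ mcB0 a b 1 ≤ mcγt a b 1 (b + 1) ∧
      mcγt a b 1 (b + 1) = (b : ℝ) / (a : ℝ)) ∧
    (2 ≤ a →
      mcPrim a b a ∧ mcPrim a b 1 ∧
      (∀ q : ℤ, mcPrim a b q → q ≠ a → mcγ a b a < mcγ a b q) ∧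
      kzero (mcΩ a b) a = vconv (mcΩ a b) 1 ∧
      kzero (mcΩ a b) 1 = vconv (mcΩ a b) 0 ∧
      1 < mcB0 a b a ∧ mcB0 a b a ≤ mcγt a b a 1 ∧
      mcγt a b a 1 = (b : ℝ) / (a : ℝ)) := by
  have hb : 2 ≤ b := by omega
  have hb₀ : 0 < b := by omega
  refine ⟨fun ha₁ => ?_, fun ha₂ => ?_⟩
  · subst ha₁
    have hq := mcEssPrim_add_one hb
    obtain ⟨hB₁, hB₂⟩ := mcB0_bounds ha hab hq (by omega)
    refine ⟨mcPrim_self ha hb, hq.1, fun q hq hq₁ => mcγ_self_lt ha hab hq hq₁,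
      kzero_mcΩ_self ha hb, kzero_mcΩ_add_one hb₀, hB₁, hB₂, ?_⟩
    rw [mcγt_self_eq ha hb, mcδ_add_one hb₀, abs_of_pos (by exact_mod_cast hb₀)]
  · have hq := mcEssPrim_one ha₂ hb₀
    obtain ⟨hB₁, hB₂⟩ := mcB0_bounds ha hab hq (by omega)
    refine ⟨mcPrim_self ha hb, hq.1, fun q hq hqa => mcγ_self_lt ha hab hq hqa,
      kzero_mcΩ_self ha hb, kzero_mcΩ_one ha₂ hb₀, hB₁, hB₂, ?_⟩
    rw [mcγt_self_eq ha hb, mcδ_one ha₂ hb₀, abs_of_pos (by exact_mod_cast hb₀)]
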